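/- Persistent Hodge decomposition: In the setting of the persistent Hodge theorem, V_q decomposes as an internal orthogonal direct sum V_q = im D ⊕ ker Δ ⊕ im (d^V_q)*, where D is the persistent boundary operator and Δ = (d^V_q)* d^V_q + D D* is the persistent Laplacian. -/

import Mathlib

/-!
For linear maps `A : G → E` and `B : E → F` of finite-dimensional inner product spaces, the
Laplacian `Δ = B† B + A A†` satisfies `⟪Δ x, x⟫ = ‖B x‖² + ‖A† x‖²`, so
`ker Δ = ker B ⊓ ker A† = (range A ⊔ range B†)ᗮ`. When `B ∘ A = 0` we also have
`range A ≤ ker B = (range B†)ᗮ`, and `E` splits orthogonally as `range A ⊕ ker Δ ⊕ range B†`.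
The persistent case is `A = D`, `B = d^V_q`, where `B ∘ D = 0` because `D` is a corestriction
of `d^W_{q+1}`.
-/

open LinearMap Submodule

namespace LinearMap

variable {𝕜 E F G : Type*} [RCLike 𝕜]
  [NormedAddCommGroup E] [InnerProductSpace 𝕜 E] [FiniteDimensional 𝕜 E]
  [NormedAddCommGroup F] [InnerProductSpace 𝕜 F] [FiniteDimensional 𝕜 F]
  [NormedAddCommGroup G] [InnerProductSpace 𝕜 G]

theorem isOrtho_range_range_adjoint {A : G →ₗ[𝕜] E} {B : E →ₗ[𝕜] F} (hBA : B ∘ₗ A = 0) :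
    range A ⟂ range B.adjoint := by
  rw [isOrtho_iff_le, orthogonal_range, adjoint_adjoint]
  exact range_le_ker_iff.mpr hBA

variable [FiniteDimensional 𝕜 G]

theorem ker_adjoint_comp_add_comp_adjoint (A : G →ₗ[𝕜] E) (B : E →ₗ[𝕜] F) :
    ker (B.adjoint ∘ₗ B + A ∘ₗ A.adjoint) = ker B ⊓ ker A.adjoint := by
  ext x
  simp only [mem_inf, mem_ker]
  constructor
  · intro hx
    have hA : inner 𝕜 (A (A.adjoint x)) x = inner 𝕜 (A.adjoint x) (A.adjoint x) :=
      (adjoint_inner_right A (A.adjoint x) x).symm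
    have hnorm : ‖B x‖ ^ 2 + ‖A.adjoint x‖ ^ 2 = 0 := by
      have h := congrArg (fun v => RCLike.re (inner 𝕜 v x)) hx
      rwa [add_apply, inner_add_left, map_add, comp_apply, comp_apply, adjoint_inner_left, hA,
        inner_self_eq_norm_sq, inner_self_eq_norm_sq, inner_zero_left, map_zero] at h
    constructor <;> rw [← norm_eq_zero] <;> nlinarith [sq_nonneg ‖B x‖, sq_nonneg ‖A.adjoint x‖]
  · rintro ⟨hBx, hAx⟩
    simp [hBx, hAx]

theorem ker_adjoint_comp_add_comp_adjoint_eq_orthogonal (A : G →ₗ[𝕜] E) (B : E →ₗ[𝕜] F) :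
    ker (B.adjoint ∘ₗ B + A ∘ₗ A.adjoint) = (range A ⊔ range B.adjoint)ᗮ := by
  rw [ker_adjoint_comp_add_comp_adjoint, ← inf_orthogonal, orthogonal_range, orthogonal_range,
    adjoint_adjoint, inf_comm]

theorem range_sup_ker_adjoint_comp_add_comp_adjoint_sup_range_adjoint
    (A : G →ₗ[𝕜] E) (B : E →ₗ[𝕜] F) :
    range A ⊔ ker (B.adjoint ∘ₗ B + A ∘ₗ A.adjoint) ⊔ range B.adjoint = ⊤ := by
  rw [ker_adjoint_comp_add_comp_adjoint_eq_orthogonal, sup_right_comm,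
    sup_orthogonal_of_hasOrthogonalProjection]

end LinearMap

theorem persistent_hodge_decomposition_general
    {W1 W0 Wm : Type*}
    [NormedAddCommGroup W1] [InnerProductSpace ℝ W1] [FiniteDimensional ℝ W1]
    [NormedAddCommGroup W0] [InnerProductSpace ℝ W0] [FiniteDimensional ℝ W0]
    [NormedAddCommGroup Wm] [InnerProductSpace ℝ Wm] [FiniteDimensional ℝ Wm]
    (d1 : W1 →ₗ[ℝ] W0) (d0 : W0 →ₗ[ℝ] Wm) (hdd : d0 ∘ₗ d1 = 0)
    (V0 : Submodule ℝ W0) (Vm : Submodule ℝ Wm)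
    (hd0 : ∀ x ∈ V0, d0 x ∈ Vm)
    (D : ↥(Submodule.comap d1 V0) →ₗ[ℝ] ↥V0)
    (hD : D = LinearMap.codRestrict V0 (d1 ∘ₗ (Submodule.comap d1 V0).subtype)
      (fun c => c.2))
    (Δ : ↥V0 →ₗ[ℝ] ↥V0)
    (hΔ : Δ = (LinearMap.adjoint (d0.restrict hd0)) ∘ₗ (d0.restrict hd0) +
      D ∘ₗ LinearMap.adjoint D) :
    (∀ x ∈ LinearMap.range D, ∀ y ∈ LinearMap.ker Δ, (inner ℝ x y : ℝ) = 0) ∧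
    (∀ x ∈ LinearMap.range D,
      ∀ y ∈ LinearMap.range (LinearMap.adjoint (d0.restrict hd0)), (inner ℝ x y : ℝ) = 0) ∧
    (∀ x ∈ LinearMap.ker Δ,
      ∀ y ∈ LinearMap.range (LinearMap.adjoint (d0.restrict hd0)), (inner ℝ x y : ℝ) = 0) ∧
    (LinearMap.range D ⊔ LinearMap.ker Δ ⊔
      LinearMap.range (LinearMap.adjoint (d0.restrict hd0)) = ⊤) := by
  set B := d0.restrict hd0
  have hBD : B ∘ₗ D = 0 := by
    ext u
    subst hD
    exact LinearMap.congr_fun hdd u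
  have hsup := range_sup_ker_adjoint_comp_add_comp_adjoint_sup_range_adjoint D B
  have hker := ker_adjoint_comp_add_comp_adjoint_eq_orthogonal D B
  rw [← hΔ] at hsup hker
  simp only [← isOrtho_iff_inner_eq, hker]
  exact ⟨(isOrtho_orthogonal_right _).mono_left le_sup_left,
    isOrtho_range_range_adjoint hBD,
    ((isOrtho_orthogonal_right _).mono_left le_sup_right).symm,
    hker ▸ hsup⟩

/-- Persistent Hodge decomposition.  In the setting of the persistent Hodge theorem, with
`Θ = {w ∈ W_{q+1} : dW w ∈ V_q}`, `D : Θ → V_q` the corestriction of `dW_{q+1}` and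
`Δ = (dV_q)* dV_q + D D*` the persistent Laplacian, the space `V_q` is the internal
orthogonal direct sum `im D ⊕ ker Δ ⊕ im (dV_q)*`. -/
theorem persistent_hodge_decomposition
    {W1 W0 Wm : Type*}
    [NormedAddCommGroup W1] [InnerProductSpace ℝ W1] [FiniteDimensional ℝ W1]
    [NormedAddCommGroup W0] [InnerProductSpace ℝ W0] [FiniteDimensional ℝ W0]
    [NormedAddCommGroup Wm] [InnerProductSpace ℝ Wm] [FiniteDimensional ℝ Wm]
    (d1 : W1 →ₗ[ℝ] W0) (d0 : W0 →ₗ[ℝ] Wm) (hdd : d0 ∘ₗ d1 = 0)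
    (V1 : Submodule ℝ W1) (V0 : Submodule ℝ W0) (Vm : Submodule ℝ Wm)
    (hd1 : ∀ x ∈ V1, d1 x ∈ V0) (hd0 : ∀ x ∈ V0, d0 x ∈ Vm)
    (D : ↥(Submodule.comap d1 V0) →ₗ[ℝ] ↥V0)
    (hD : D = LinearMap.codRestrict V0 (d1 ∘ₗ (Submodule.comap d1 V0).subtype)
      (fun c => c.2))
    (Δ : ↥V0 →ₗ[ℝ] ↥V0)
    (hΔ : Δ = (LinearMap.adjoint (d0.restrict hd0)) ∘ₗ (d0.restrict hd0) +
      D ∘ₗ LinearMap.adjoint D) :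
    (∀ x ∈ LinearMap.range D, ∀ y ∈ LinearMap.ker Δ, (inner ℝ x y : ℝ) = 0) ∧
    (∀ x ∈ LinearMap.range D,
      ∀ y ∈ LinearMap.range (LinearMap.adjoint (d0.restrict hd0)), (inner ℝ x y : ℝ) = 0) ∧
    (∀ x ∈ LinearMap.ker Δ,
      ∀ y ∈ LinearMap.range (LinearMap.adjoint (d0.restrict hd0)), (inner ℝ x y : ℝ) = 0) ∧
    (LinearMap.range D ⊔ LinearMap.ker Δ ⊔
      LinearMap.range (LinearMap.adjoint (d0.restrict hd0)) = ⊤) :=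
  persistent_hodge_decomposition_general d1 d0 hdd V0 Vm hd0 D hD Δ hΔ
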